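/- Let T, N, B : I → ℝ³ with curvature κ and torsion τ be a Frenet-framed unit speed spacelike curve with spacelike normal in Minkowski 3-space on an open interval I, and assume τ(s)² − κ(s)² > 0 for all s ∈ I. Then the curve is a slant helix (i.e. there is a constant vector U ≠ 0 with s ↦ ⟨N(s),U⟩ constant) if and only if there is a real constant c such that for all s ∈ I, (κ(s)²/(τ(s)² − κ(s)²)^{3/2}) · (τ/κ)'(s) = c. -/

import Mathlib

open Real
open Matrix

noncomputable def mink (x y : Fin 3 → ℝ) : ℝ := x 0 * y 0 + x 1 * y 1 - x 2 * y 2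

lemma const_of_hasDerivAt_zero {I : Set ℝ} (hC : Convex ℝ I) (hIo : IsOpen I) {f : ℝ → ℝ}
    (hf : ∀ s ∈ I, HasDerivAt f 0 s) {x y : ℝ} (hx : x ∈ I) (hy : y ∈ I) : f x = f y := by
  apply hC.is_const_of_fderivWithin_eq_zero
    (fun s hs => ((hf s hs).differentiableAt).differentiableWithinAt) ?_ hx hy
  intro s hs
  rw [((hf s hs).hasFDerivAt.hasFDerivWithinAt (s := I)).fderivWithin (hIo.uniqueDiffWithinAt hs)]
  ext v
  simp

lemma span_zero (t n b u : Fin 3 → ℝ)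
    (htt : mink t t = 1) (hnn : mink n n = 1) (hbb : mink b b = -1)
    (htn : mink t n = 0) (htb : mink t b = 0) (hnb : mink n b = 0)
    (h1 : mink t u = 0) (h2 : mink n u = 0) (h3 : mink b u = 0) : u = 0 := by
  classical
  simp only [mink] at htt hnn hbb htn htb hnb h1 h2 h3
  set η : Matrix (Fin 3) (Fin 3) ℝ := !![1,0,0;0,1,0;0,0,-1] with hη
  set M : Matrix (Fin 3) (Fin 3) ℝ := !![t 0, t 1, t 2; n 0, n 1, n 2; b 0, b 1, b 2] with hM
  have hG : M * η * Mᵀ = η := by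
    ext i j
    fin_cases i <;> fin_cases j <;>
      simp [hM, hη, Matrix.mul_apply, Fin.sum_univ_three, Matrix.transpose_apply,
        Matrix.vecHead, Matrix.vecTail] <;> linarith
  have hdet : M.det ≠ 0 := by
    have h := congrArg Matrix.det hG
    rw [Matrix.det_mul, Matrix.det_mul, Matrix.det_transpose] at h
    have hηd : η.det = -1 := by simp [hη, Matrix.det_fin_three, Matrix.vecHead, Matrix.vecTail]
    rw [hηd] at h
    intro h0
    rw [h0] at h
    norm_num at h
  have hv : M *ᵥ ![u 0, u 1, -u 2] = 0 := by
    ext i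
    fin_cases i <;>
      simp [hM, Matrix.mulVec, dotProduct, Fin.sum_univ_three,
        Matrix.vecHead, Matrix.vecTail] <;> linarith
  have hz := Matrix.eq_zero_of_mulVec_eq_zero hdet hv
  have e0 := congrFun hz 0
  have e1 := congrFun hz 1
  have e2 := congrFun hz 2
  simp at e0 e1 e2
  funext i
  fin_cases i <;> simp [e0, e1] <;> linarith

lemma hasDerivAt_mink_left {f : ℝ → Fin 3 → ℝ} {f' : Fin 3 → ℝ} (u : Fin 3 → ℝ) {s : ℝ}
    (hf : HasDerivAt f f' s) : HasDerivAt (fun t => mink (f t) u) (mink f' u) s := by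
  have h0 := (hasDerivAt_pi.1 hf) 0
  have h1 := (hasDerivAt_pi.1 hf) 1
  have h2 := (hasDerivAt_pi.1 hf) 2
  simp only [mink]
  exact ((h0.mul_const (u 0)).add (h1.mul_const (u 1))).sub (h2.mul_const (u 2))

lemma mink_right_combo (x t n b : Fin 3 → ℝ) (p q r : ℝ) :
    mink x (p • t + q • n + r • b) = p * mink x t + q * mink x n + r * mink x b := by
  simp [mink]; ring

lemma mink_comm (x y : Fin 3 → ℝ) : mink x y = mink y x := by
  simp [mink]; ring

lemma mink_combo_self (t n b : Fin 3 → ℝ) (p q r : ℝ) :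
    mink (p • t + q • n + r • b) (p • t + q • n + r • b) =
      p ^ 2 * mink t t + q ^ 2 * mink n n + r ^ 2 * mink b b +
        2 * p * q * mink t n + 2 * p * r * mink t b + 2 * q * r * mink n b := by
  simp [mink]; ring

theorem stmt2
    (I : Set ℝ) (hIopen : IsOpen I) (hIconn : I.OrdConnected)
    (T N B : ℝ → Fin 3 → ℝ) (κ τ : ℝ → ℝ)
    (hTs : ContDiffOn ℝ (⊤ : ℕ∞) T I) (hNs : ContDiffOn ℝ (⊤ : ℕ∞) N I)
    (hBs : ContDiffOn ℝ (⊤ : ℕ∞) B I)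
    (hκs : ContDiffOn ℝ (⊤ : ℕ∞) κ I) (hκ0 : ∀ s ∈ I, κ s ≠ 0)
    (hτs : ContDiffOn ℝ (⊤ : ℕ∞) τ I) (hτ0 : ∀ s ∈ I, τ s ≠ 0)
    (hTT : ∀ s ∈ I, mink (T s) (T s) = 1)
    (hNN : ∀ s ∈ I, mink (N s) (N s) = 1)
    (hBB : ∀ s ∈ I, mink (B s) (B s) = -1)
    (hTN : ∀ s ∈ I, mink (T s) (N s) = 0)
    (hTB : ∀ s ∈ I, mink (T s) (B s) = 0)
    (hNB : ∀ s ∈ I, mink (N s) (B s) = 0)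
    (hT' : ∀ s ∈ I, HasDerivAt T (κ s • N s) s)
    (hN' : ∀ s ∈ I, HasDerivAt N (-κ s • T s + τ s • B s) s)
    (hB' : ∀ s ∈ I, HasDerivAt B (τ s • N s) s)
    (hpos : ∀ s ∈ I, τ s ^ 2 - κ s ^ 2 > 0) :
    (∃ U : Fin 3 → ℝ, U ≠ 0 ∧ ∃ d : ℝ, ∀ s ∈ I, mink (N s) U = d) ↔
      (∃ c : ℝ, ∀ s ∈ I, κ s ^ 2 / (τ s ^ 2 - κ s ^ 2) ^ ((3 : ℝ) / 2) * deriv (fun u => τ u / κ u) s = c) := by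
  have hconv : Convex ℝ I := convex_iff_ordConnected.mpr hIconn
  set n : ℝ → ℝ := fun s => Real.sqrt (τ s ^ 2 - κ s ^ 2) with hn
  have hn_pos : ∀ s ∈ I, 0 < n s := fun s hs => Real.sqrt_pos.2 (hpos s hs)
  have hn0 : ∀ s ∈ I, n s ≠ 0 := fun s hs => (hn_pos s hs).ne'
  have hn_sq : ∀ s ∈ I, n s ^ 2 = τ s ^ 2 - κ s ^ 2 := fun s hs =>
    Real.sq_sqrt (hpos s hs).le
  have hκd : ∀ s ∈ I, HasDerivAt κ (deriv κ s) s := fun s hs =>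
    ((hκs.contDiffAt (hIopen.mem_nhds hs)).differentiableAt (by simp)).hasDerivAt
  have hτd : ∀ s ∈ I, HasDerivAt τ (deriv τ s) s := fun s hs =>
    ((hτs.contDiffAt (hIopen.mem_nhds hs)).differentiableAt (by simp)).hasDerivAt
  have hq : ∀ s ∈ I, HasDerivAt (fun u => τ u / κ u)
      ((deriv τ s * κ s - τ s * deriv κ s) / κ s ^ 2) s := fun s hs =>
    (hτd s hs).div (hκd s hs) (hκ0 s hs)
  have hrpow : ∀ s ∈ I, (τ s ^ 2 - κ s ^ 2) ^ ((3 : ℝ) / 2) = n s ^ 3 := by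
    intro s hs
    rw [show ((3 : ℝ) / 2) = (1 / 2 : ℝ) * ((3 : ℕ) : ℝ) by norm_num,
      Real.rpow_mul (hpos s hs).le, Real.rpow_natCast, ← Real.sqrt_eq_rpow]
  have hσ : ∀ s ∈ I, κ s ^ 2 / (τ s ^ 2 - κ s ^ 2) ^ ((3 : ℝ) / 2) * deriv (fun u => τ u / κ u) s =
      (deriv τ s * κ s - τ s * deriv κ s) / n s ^ 3 := by
    intro s hs
    rw [hrpow s hs, (hq s hs).deriv]
    have h1 := hκ0 s hs
    have h2 := hn0 s hs
    field_simp
  have hnd : ∀ s ∈ I, HasDerivAt n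
      ((2 * τ s ^ 1 * deriv τ s - 2 * κ s ^ 1 * deriv κ s) / (2 * Real.sqrt (τ s ^ 2 - κ s ^ 2))) s := by
    intro s hs
    have hsq : HasDerivAt (fun t => τ t ^ 2 - κ t ^ 2)
        (2 * τ s ^ 1 * deriv τ s - 2 * κ s ^ 1 * deriv κ s) s :=
      ((hτd s hs).pow 2).sub ((hκd s hs).pow 2)
    exact hsq.sqrt (hpos s hs).ne'
  constructor
  · -- forward
    rintro ⟨U, hU0, d, hd⟩
    by_cases hne : I.Nonempty
    swap
    · exact ⟨0, fun s hs => absurd ⟨s, hs⟩ hne⟩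
    obtain ⟨s₀, hs₀⟩ := hne
    set a : ℝ → ℝ := fun s => mink (T s) U with ha
    set m : ℝ → ℝ := fun s => mink (B s) U with hm
    have ha' : ∀ s ∈ I, HasDerivAt a (κ s * d) s := by
      intro s hs
      have h := hasDerivAt_mink_left U (hT' s hs)
      have hv : mink (κ s • N s) U = κ s * d := by
        rw [← hd s hs]; simp [mink]; ring
      rwa [hv] at h
    have hm' : ∀ s ∈ I, HasDerivAt m (τ s * d) s := by
      intro s hs
      have h := hasDerivAt_mink_left U (hB' s hs)
      have hv : mink (τ s • N s) U = τ s * d := by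
        rw [← hd s hs]; simp [mink]; ring
      rwa [hv] at h
    have hNder : ∀ s ∈ I, HasDerivAt (fun t => mink (N t) U) (-κ s * a s + τ s * m s) s := by
      intro s hs
      have h := hasDerivAt_mink_left U (hN' s hs)
      have hv : mink (-κ s • T s + τ s • B s) U = -κ s * a s + τ s * m s := by
        simp [mink, ha, hm]; ring
      rwa [hv] at h
    have hNzero : ∀ s ∈ I, HasDerivAt (fun t => mink (N t) U) 0 s := fun s hs =>
      (hasDerivAt_const s d).congr_of_eventuallyEq
        (Filter.eventuallyEq_of_mem (hIopen.mem_nhds hs) (fun t ht => hd t ht))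
    have hconstr : ∀ s ∈ I, -κ s * a s + τ s * m s = 0 := fun s hs =>
      (hNder s hs).unique (hNzero s hs)
    have hamd : ∀ s ∈ I, HasDerivAt (fun t => a t ^ 2 - m t ^ 2) 0 s := by
      intro s hs
      have h := (((ha' s hs).pow 2).sub ((hm' s hs).pow 2))
      refine h.congr_deriv ?_
      push_cast
      linear_combination (-(2 * d)) * hconstr s hs
    have hg2 : ∀ s ∈ I, a s ^ 2 - m s ^ 2 = a s₀ ^ 2 - m s₀ ^ 2 := fun s hs =>
      const_of_hasDerivAt_zero hconv hIopen hamd hs hs₀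
    set g2 : ℝ := a s₀ ^ 2 - m s₀ ^ 2 with hg2def
    have hg2eq : ∀ s ∈ I, a s ^ 2 * (τ s ^ 2 - κ s ^ 2) = g2 * τ s ^ 2 := by
      intro s hs
      have hms : τ s * m s = κ s * a s := by linarith [hconstr s hs]
      linear_combination τ s ^ 2 * (hg2 s hs) + (τ s * m s + κ s * a s) * hms
    have hg2nonneg : 0 ≤ g2 := by
      have h1 := hpos s₀ hs₀
      have h2 := pow_two_pos_of_ne_zero (hτ0 s₀ hs₀)
      nlinarith [hg2eq s₀ hs₀, sq_nonneg (a s₀)]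
    by_cases hg2z : g2 = 0
    · -- degenerate case: U = 0, contradiction
      exfalso
      have haz : ∀ s ∈ I, a s = 0 := by
        intro s hs
        have h := hg2eq s hs
        rw [hg2z] at h
        simp only [zero_mul] at h
        rcases mul_eq_zero.1 h with h2 | h2
        · exact pow_eq_zero_iff (by norm_num) |>.1 h2
        · exact absurd h2 (hpos s hs).ne'
      have hmz : ∀ s ∈ I, m s = 0 := by
        intro s hs
        have hc := hconstr s hs
        rw [haz s hs] at hc
        have h : τ s * m s = 0 := by linarith
        rcases mul_eq_zero.1 h with h' | h'
        · exact absurd h' (hτ0 s hs)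
        · exact h'
      have hdz : d = 0 := by
        have hza : HasDerivAt a 0 s₀ :=
          (hasDerivAt_const s₀ 0).congr_of_eventuallyEq
            (Filter.eventuallyEq_of_mem (hIopen.mem_nhds hs₀) (fun t ht => haz t ht))
        have h := (ha' s₀ hs₀).unique hza
        rcases mul_eq_zero.1 h with h' | h'
        · exact absurd h' (hκ0 s₀ hs₀)
        · exact h'
      have hU : U = 0 := by
        apply span_zero (T s₀) (N s₀) (B s₀) U (hTT s₀ hs₀) (hNN s₀ hs₀) (hBB s₀ hs₀)
          (hTN s₀ hs₀) (hTB s₀ hs₀) (hNB s₀ hs₀) (haz s₀ hs₀) ?_ (hmz s₀ hs₀)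
        rw [hd s₀ hs₀, hdz]
      exact hU0 hU
    · -- nondegenerate case
      have hg2pos : 0 < g2 := lt_of_le_of_ne hg2nonneg (Ne.symm hg2z)
      have ha0 : ∀ s ∈ I, a s ≠ 0 := by
        intro s hs h
        have h1 := hg2eq s hs
        rw [h] at h1
        simp only [ne_eq, OfNat.ofNat_ne_zero, not_false_eq_true, zero_pow, zero_mul] at h1
        rcases mul_eq_zero.1 h1.symm with h2 | h2
        · exact hg2z h2
        · exact pow_ne_zero 2 (hτ0 s hs) h2
      set G : ℝ → ℝ := fun s => a s * n s / τ s with hG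
      have hGsq : ∀ s ∈ I, G s ^ 2 = g2 := by
        intro s hs
        rw [hG]
        have hτ := hτ0 s hs
        field_simp
        linear_combination a s ^ 2 * hn_sq s hs + hg2eq s hs
      have hG0 : ∀ s ∈ I, G s ≠ 0 := by
        intro s hs h
        have h2 := hGsq s hs
        rw [h] at h2
        simp at h2
        exact hg2z h2.symm
      have hGd : ∀ s ∈ I, HasDerivAt G 0 s := by
        intro s hs
        obtain ⟨e, hGe⟩ : ∃ e, HasDerivAt G e s :=
          ⟨_, ((ha' s hs).mul (hnd s hs)).div (hτd s hs) (hτ0 s hs)⟩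
        have hsqd : HasDerivAt (fun t => G t ^ 2) (2 * G s ^ 1 * e) s := hGe.pow 2
        have hsq0 : HasDerivAt (fun t => G t ^ 2) 0 s :=
          (hasDerivAt_const s g2).congr_of_eventuallyEq
            (Filter.eventuallyEq_of_mem (hIopen.mem_nhds hs) (fun t ht => hGsq t ht))
        have h0 : 2 * G s ^ 1 * e = 0 := hsqd.unique hsq0
        have he0 : e = 0 := by
          simp only [pow_one] at h0
          rcases mul_eq_zero.1 h0 with h | h
          · rcases mul_eq_zero.1 h with h | h
            · norm_num at h
            · exact absurd h (hG0 s hs)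
          · exact h
        rwa [he0] at hGe
      refine ⟨-d / G s₀, fun s hs => ?_⟩
      have hφ : HasDerivAt (fun t => -κ t * a t + τ t * m t)
          ((-(deriv κ s) * a s + -κ s * (κ s * d)) + (deriv τ s * m s + τ s * (τ s * d))) s :=
        (((hκd s hs).neg.mul (ha' s hs)).add ((hτd s hs).mul (hm' s hs)))
      have hφ0 : HasDerivAt (fun t => -κ t * a t + τ t * m t) 0 s :=
        (hasDerivAt_const s (0:ℝ)).congr_of_eventuallyEq
          (Filter.eventuallyEq_of_mem (hIopen.mem_nhds hs) (fun t ht => hconstr t ht))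
      have e1 : (-(deriv κ s) * a s + -κ s * (κ s * d)) + (deriv τ s * m s + τ s * (τ s * d)) = 0 :=
        hφ.unique hφ0
      have e2 := hconstr s hs
      have e3 := hn_sq s hs
      have key : (deriv τ s * κ s - τ s * deriv κ s) * a s = -(d * τ s * n s ^ 2) := by
        linear_combination τ s * e1 - deriv τ s * e2 + d * τ s * e3
      have hGc : G s = G s₀ := const_of_hasDerivAt_zero hconv hIopen hGd hs hs₀
      rw [hσ s hs, ← hGc, hG]
      have hns := hn0 s hs
      have hτs' := hτ0 s hs
      have has' := ha0 s hs
      field_simp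
      linear_combination key
  · -- converse
    rintro ⟨c, hc⟩
    by_cases hne : I.Nonempty
    swap
    · refine ⟨![1,0,0], ?_, 0, fun s hs => absurd ⟨s, hs⟩ hne⟩
      intro h
      have h0 := congrFun h 0
      simp at h0
    obtain ⟨s₀, hs₀⟩ := hne
    have key2 : ∀ s ∈ I, deriv τ s * κ s - τ s * deriv κ s = c * n s ^ 3 := by
      intro s hs
      have h := hc s hs
      rw [hσ s hs] at h
      have hns := hn0 s hs
      field_simp at h
      linear_combination h
    have hτnd : ∀ s ∈ I, HasDerivAt (fun t => τ t / n t) (-(κ s * c)) s := by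
      intro s hs
      have h := (hτd s hs).div (hnd s hs) (hn0 s hs)
      refine h.congr_deriv ?_
      have e3 := hn_sq s hs
      have hk2 := key2 s hs
      have hns := hn0 s hs
      have hnn : Real.sqrt (τ s ^ 2 - κ s ^ 2) = n s := rfl
      rw [hnn]
      field_simp
      linear_combination (-κ s) * hk2 + (deriv τ s) * e3
    have hκnd : ∀ s ∈ I, HasDerivAt (fun t => κ t / n t) (-(τ s * c)) s := by
      intro s hs
      have h := (hκd s hs).div (hnd s hs) (hn0 s hs)
      refine h.congr_deriv ?_
      have e3 := hn_sq s hs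
      have hk2 := key2 s hs
      have hns := hn0 s hs
      have hnn : Real.sqrt (τ s ^ 2 - κ s ^ 2) = n s := rfl
      rw [hnn]
      field_simp
      linear_combination (-τ s) * hk2 + (deriv κ s) * e3
    set W : ℝ → Fin 3 → ℝ := fun s => (-(τ s / n s)) • T s + c • N s + (κ s / n s) • B s with hW
    have hW' : ∀ s ∈ I, ∀ i : Fin 3, HasDerivAt (fun t => W t i) 0 s := by
      intro s hs i
      have hTi := (hasDerivAt_pi.1 (hT' s hs)) i
      have hNi := (hasDerivAt_pi.1 (hN' s hs)) i
      have hBi := (hasDerivAt_pi.1 (hB' s hs)) i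
      have h1 : HasDerivAt (fun t => -(τ t / n t)) (κ s * c) s := by
        exact (hτnd s hs).neg.congr_deriv (neg_neg _)
      have h := ((h1.mul hTi).add (hNi.const_mul c)).add ((hκnd s hs).mul hBi)
      have hfeq : (fun t => W t i) =
          fun t => (-(τ t / n t) * T t i + c * N t i) + κ t / n t * B t i := by
        funext t
        simp [hW]
      rw [hfeq]
      have hzv : (κ s * c * T s i + -(τ s / n s) * (κ s • N s) i + c * ((-κ s • T s + τ s • B s) i)) + (-(τ s * c) * B s i + κ s / n s * (τ s • N s) i) = 0 := by
        simp [Pi.smul_apply, smul_eq_mul]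
        ring
      rw [← hzv]
      exact h
    have hWc : ∀ s ∈ I, W s = W s₀ := by
      intro s hs
      funext i
      exact const_of_hasDerivAt_zero hconv hIopen (fun t ht => hW' t ht i) hs hs₀
    refine ⟨W s₀, ?_, c, fun s hs => ?_⟩
    · intro h
      have hval : mink (W s₀) (W s₀) = 1 + c ^ 2 := by
        rw [hW, mink_combo_self, hTT s₀ hs₀, hNN s₀ hs₀, hBB s₀ hs₀, hTN s₀ hs₀,
          hTB s₀ hs₀, hNB s₀ hs₀]
        have hns := hn0 s₀ hs₀
        have e3 := hn_sq s₀ hs₀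
        field_simp
        linear_combination -e3
      rw [h] at hval
      simp [mink] at hval
      nlinarith [sq_nonneg c, hval]
    · rw [← hWc s hs, hW, mink_right_combo, hNN s hs,
        mink_comm (N s) (T s), hTN s hs, hNB s hs]
      ring
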